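/- arXiv:2007.00123 — 3 statements merged into one kernel-verified Lean document; each statement's English description precedes it below -/
import Mathlib

section
/- Let p be a prime and let d be a proper divisor of m such that for every prime ℓ dividing m, writing α = ν_ℓ(m) and β = ν_ℓ(d): β ∈ {0, α} if ℓ ≠ p; β = 1 if ℓ = p and α = 1; β ∈ {1, α−1, α} if ℓ = p = 2 and α ≥ 2; and β ∈ {α−1, α} if ℓ = p > 2 and α ≥ 2. Then for every positive integer n with gcd(n, m) = 1, the following are equivalent: (1) gcd(n−1, m) = d and m divides n^p − 1; (2) d divides n − 1, m/d divides n^(p−1) + n^(p−2) + ⋯ + n + 1, and if ν_p(m) = ν_p(d) + 1 then ν_p(n−1) = ν_p(d). -/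
/-! Put `S = 1 + n + ⋯ + n ^ (p - 1)`, so that `n ^ p - 1 = (n - 1) * S`, and note that
`S ≡ p` modulo `n - 1`: every common divisor of `n - 1` and `S` divides `p`. Writing `m = d * c`,
(1) ⇒ (2) is cancellation of `d = gcd (n - 1) m` from `m ∣ (n - 1) * S`. For (2) ⇒ (1) it
remains to see `gcd (n - 1) m ∣ d`, one prime `ℓ` at a time. For `ℓ ≠ p` either `ℓ`-parts of `d`
and `m` agree, or `ℓ ∤ d`, and then `ℓ ∣ c ∣ S` keeps `ℓ` out of `n - 1`. At `ℓ = p` the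
hypotheses on `d` leave `ν_p(c) ≤ 1`, settled by the valuation condition in (2), or `p = 2`,
`ν_2(d) = 1` and `4 ∣ c ∣ n + 1`, so that `4 ∤ n - 1`. -/

open Finset

theorem Nat.sub_one_mul_geom_sum (n p : ℕ) : (n - 1) * ∑ i ∈ range p, n ^ i = n ^ p - 1 := by
  rcases n with _ | n
  · cases p <;> simp
  · rw [← geom_sum_mul_add n p, Nat.add_sub_cancel, Nat.add_sub_cancel, mul_comm]

theorem Nat.dvd_of_dvd_sub_one_of_dvd_geom_sum {k n p : ℕ} (hn : 1 ≤ n) (h1 : k ∣ n - 1)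
    (h2 : k ∣ ∑ i ∈ range p, n ^ i) : k ∣ p := by
  have hn1 : (n : ZMod k) = 1 := by
    simpa using ((ZMod.natCast_eq_natCast_iff _ _ _).mpr ((Nat.modEq_iff_dvd' hn).mpr h1)).symm
  rw [← ZMod.natCast_eq_zero_iff] at h2 ⊢
  simpa [hn1] using h2

theorem padicValNat_gcd {ℓ a b : ℕ} [Fact ℓ.Prime] (ha : a ≠ 0) (hb : b ≠ 0) :
    padicValNat ℓ (Nat.gcd a b) = min (padicValNat ℓ a) (padicValNat ℓ b) := by
  simp only [← Nat.factorization_def _ Fact.out, Nat.factorization_gcd ha hb, Finsupp.inf_apply]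

theorem dvd_of_forall_padicValNat_le {a b : ℕ} (ha : a ≠ 0) (hb : b ≠ 0)
    (h : ∀ ℓ, ℓ.Prime → padicValNat ℓ a ≤ padicValNat ℓ b) : a ∣ b := by
  rw [← Nat.factorization_prime_le_iff_dvd ha hb]
  intro ℓ hℓ
  simpa only [Nat.factorization_def _ hℓ] using h ℓ hℓ

theorem Nat.dvd_of_gcd_mul_eq {a b c d : ℕ} (hd : d ≠ 0) (hg : Nat.gcd a (d * c) = d)
    (h : d * c ∣ a * b) : c ∣ b := by
  have hcop := Nat.coprime_div_gcd_div_gcd (m := a) (n := d * c) (by omega)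
  rw [hg, Nat.mul_div_cancel_left c (Nat.pos_of_ne_zero hd)] at hcop
  refine hcop.symm.dvd_of_dvd_mul_left (Nat.dvd_of_mul_dvd_mul_left (Nat.pos_of_ne_zero hd) ?_)
  rwa [← mul_assoc, Nat.mul_div_cancel' (hg ▸ Nat.gcd_dvd_left a (d * c))]

section GcdBound

variable {n p d c : ℕ}

theorem min_padicValNat_sub_one_le_of_not_dvd {ℓ : ℕ} [Fact ℓ.Prime] (hℓp : ¬ ℓ ∣ p)
    (hn : 1 ≤ n) (hd : d ≠ 0) (hc0 : c ≠ 0) (hc : c ∣ ∑ i ∈ range p, n ^ i)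
    (hβ : padicValNat ℓ d = 0 ∨ padicValNat ℓ d = padicValNat ℓ (d * c)) :
    min (padicValNat ℓ (n - 1)) (padicValNat ℓ (d * c)) ≤ padicValNat ℓ d := by
  rcases hβ with hβ | hβ
  · by_cases hℓc : ℓ ∣ c
    · have : ¬ ℓ ∣ n - 1 := fun h ↦ hℓp (Nat.dvd_of_dvd_sub_one_of_dvd_geom_sum hn h (hℓc.trans hc))
      simp [padicValNat.eq_zero_of_not_dvd this]
    · simp [padicValNat.mul hd hc0, padicValNat.eq_zero_of_not_dvd hℓc, hβ]
  · exact hβ ▸ min_le_right _ _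

theorem min_padicValNat_sub_one_le_self [Fact p.Prime] (hn : 1 ≤ n) (hd : d ≠ 0) (hc0 : c ≠ 0)
    (hc : c ∣ ∑ i ∈ range p, n ^ i)
    (hat : padicValNat p (d * c) ≤ padicValNat p d + 1 ∨ p = 2 ∧ padicValNat p d = 1)
    (hsucc : padicValNat p (d * c) = padicValNat p d + 1 →
      padicValNat p (n - 1) = padicValNat p d) :
    min (padicValNat p (n - 1)) (padicValNat p (d * c)) ≤ padicValNat p d := by
  by_cases hle : padicValNat p (d * c) ≤ padicValNat p d + 1
  · rcases hle.lt_or_eq with hlt | heq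
    · exact (min_le_right _ _).trans (Nat.lt_succ_iff.mp hlt)
    · exact (min_le_left _ _).trans (hsucc heq).le
  obtain ⟨rfl, hβ⟩ := hat.resolve_left hle
  have h4c : 2 ^ 2 ∣ c := by
    rw [padicValNat_dvd_iff_le hc0]
    rw [padicValNat.mul hd hc0] at hle
    omega
  have h4 : ¬ 2 ^ 2 ∣ n - 1 := fun h ↦ by
    simpa using Nat.dvd_of_dvd_sub_one_of_dvd_geom_sum hn h (h4c.trans hc)
  rw [padicValNat_dvd_iff] at h4
  omega

theorem gcd_sub_one_mul_dvd [Fact p.Prime] (hn : 1 < n) (hd : d ≠ 0) (hc0 : c ≠ 0)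
    (hc : c ∣ ∑ i ∈ range p, n ^ i)
    (hoff : ∀ ℓ, ℓ.Prime → ℓ ∣ d * c → ℓ ≠ p →
      padicValNat ℓ d = 0 ∨ padicValNat ℓ d = padicValNat ℓ (d * c))
    (hat : p ∣ d * c →
      padicValNat p (d * c) ≤ padicValNat p d + 1 ∨ p = 2 ∧ padicValNat p d = 1)
    (hsucc : padicValNat p (d * c) = padicValNat p d + 1 →
      padicValNat p (n - 1) = padicValNat p d) :
    Nat.gcd (n - 1) (d * c) ∣ d := by
  refine dvd_of_forall_padicValNat_le (Nat.gcd_ne_zero_right (by positivity)) hd fun ℓ hℓ ↦ ?_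
  have := Fact.mk hℓ
  rw [padicValNat_gcd (by omega) (by positivity)]
  by_cases hℓm : ℓ ∣ d * c
  · by_cases hℓp : ℓ = p
    · subst hℓp
      exact min_padicValNat_sub_one_le_self hn.le hd hc0 hc (hat hℓm) hsucc
    · exact min_padicValNat_sub_one_le_of_not_dvd
        (mt (Nat.prime_dvd_prime_iff_eq hℓ Fact.out).mp hℓp) hn.le hd hc0 hc (hoff ℓ hℓ hℓm hℓp)
  · simp [padicValNat.eq_zero_of_not_dvd hℓm]

end GcdBound

theorem admissible_valuations_at_prime {p α β : ℕ} (hp : p.Prime) (hα : 1 ≤ α)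
    (h1 : α = 1 → β = 1) (h2 : p = 2 → 2 ≤ α → β = 1 ∨ β = α - 1 ∨ β = α)
    (h3 : 2 < p → 2 ≤ α → β = α - 1 ∨ β = α) :
    1 ≤ β ∧ (α ≤ β + 1 ∨ p = 2 ∧ β = 1) := by
  rcases Nat.lt_or_ge α 2 with hα2 | hα2
  · have := h1 (by omega)
    omega
  · rcases hp.two_le.eq_or_lt with rfl | hp2
    · rcases h2 rfl hα2 with h | h | h <;> omega
    · rcases h3 hp2 hα2 with h | h <;> omega

theorem stmt_2_general (m : ℕ)
    (p : ℕ) (hp : p.Prime)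
    (d : ℕ) (hdm : d ∣ m) (hdne : d ≠ m)
    (hval : ∀ ℓ : ℕ, ℓ.Prime → ℓ ∣ m →
      (ℓ ≠ p → padicValNat ℓ d = 0 ∨ padicValNat ℓ d = padicValNat ℓ m) ∧
      (ℓ = p → padicValNat ℓ m = 1 → padicValNat ℓ d = 1) ∧
      (ℓ = p → p = 2 → 2 ≤ padicValNat ℓ m →
        padicValNat ℓ d = 1 ∨ padicValNat ℓ d = padicValNat ℓ m - 1 ∨
          padicValNat ℓ d = padicValNat ℓ m) ∧
      (ℓ = p → 2 < p → 2 ≤ padicValNat ℓ m →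
        padicValNat ℓ d = padicValNat ℓ m - 1 ∨ padicValNat ℓ d = padicValNat ℓ m)) :
    ∀ n : ℕ, 0 < n → Nat.gcd n m = 1 →
      ((Nat.gcd (n - 1) m = d ∧ m ∣ n ^ p - 1) ↔
        (d ∣ n - 1 ∧ (m / d) ∣ ∑ i ∈ Finset.range p, n ^ i ∧
          (padicValNat p m = padicValNat p d + 1 →
            padicValNat p (n - 1) = padicValNat p d))) := by
  intro n hn hcop
  have := Fact.mk hp
  obtain ⟨c, rfl⟩ := hdm
  have hd : d ≠ 0 := by rintro rfl; simp at hdne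
  have hc1 : c ≠ 1 := by rintro rfl; simp at hdne
  have hat (hc0 : c ≠ 0) (hpm : p ∣ d * c) := admissible_valuations_at_prime hp
    (one_le_padicValNat_of_dvd (by positivity) hpm)
    ((hval p hp hpm).2.1 rfl) ((hval p hp hpm).2.2.1 rfl) ((hval p hp hpm).2.2.2 rfl)
  rw [Nat.mul_div_cancel_left c (Nat.pos_of_ne_zero hd), ← Nat.sub_one_mul_geom_sum]
  rcases eq_or_ne n 1 with rfl | hn1
  -- For `n = 1`, (2) forces `c = p` and then `ν_p(d) = ν_p(0) = 0`, which `hval` excludes.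
  · refine iff_of_false (fun ⟨hg, _⟩ ↦ hc1 ?_) fun ⟨_, hcp, hsucc⟩ ↦ ?_
    · simpa [hd] using hg
    · have hcp : c = p := ((Nat.dvd_prime hp).mp (by simpa using hcp)).resolve_left hc1
      rw [hcp, padicValNat.mul hd hp.ne_zero, padicValNat_self, padicValNat_zero_right] at hsucc
      have := (hat (hcp ▸ hp.ne_zero) (hcp ▸ dvd_mul_left p d)).1
      omega
  · have hc0 : c ≠ 0 := by rintro rfl; simp at hcop; omega
    constructor
    · rintro ⟨hg, hdvd⟩
      refine ⟨hg ▸ Nat.gcd_dvd_left _ _, Nat.dvd_of_gcd_mul_eq hd hg hdvd, fun hsucc ↦ ?_⟩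
      have := padicValNat_gcd (ℓ := p) (a := n - 1) (b := d * c) (by omega) (by positivity)
      rw [hg] at this
      omega
    · rintro ⟨hd1, hc, hsucc⟩
      refine ⟨Nat.dvd_antisymm ?_ (Nat.dvd_gcd hd1 (dvd_mul_right d c)), mul_dvd_mul hd1 hc⟩
      exact gcd_sub_one_mul_dvd (by omega) hd hc0 hc (fun ℓ hℓ hℓm ↦ (hval ℓ hℓ hℓm).1)
        (fun hpm ↦ (hat hc0 hpm).2) hsucc

/-- Theorem 2.4: characterization of the n for which the Rédei permutation
has d + χ + 1 fixed points and p-cycles. -/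
theorem stmt_2 (q : ℕ) (hq : ∃ p k : ℕ, p.Prime ∧ Odd p ∧ 0 < k ∧ q = p ^ k)
    (χ : ℤ) (hχ : χ = 1 ∨ χ = -1) (m : ℕ) (hm : (m : ℤ) = (q : ℤ) - χ)
    (p : ℕ) (hp : p.Prime)
    (d : ℕ) (hdm : d ∣ m) (hdne : d ≠ m)
    (hval : ∀ ℓ : ℕ, ℓ.Prime → ℓ ∣ m →
      (ℓ ≠ p → padicValNat ℓ d = 0 ∨ padicValNat ℓ d = padicValNat ℓ m) ∧
      (ℓ = p → padicValNat ℓ m = 1 → padicValNat ℓ d = 1) ∧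
      (ℓ = p → p = 2 → 2 ≤ padicValNat ℓ m →
        padicValNat ℓ d = 1 ∨ padicValNat ℓ d = padicValNat ℓ m - 1 ∨
          padicValNat ℓ d = padicValNat ℓ m) ∧
      (ℓ = p → 2 < p → 2 ≤ padicValNat ℓ m →
        padicValNat ℓ d = padicValNat ℓ m - 1 ∨ padicValNat ℓ d = padicValNat ℓ m)) :
    ∀ n : ℕ, 0 < n → Nat.gcd n m = 1 →
      ((Nat.gcd (n - 1) m = d ∧ m ∣ n ^ p - 1) ↔
        (d ∣ n - 1 ∧ (m / d) ∣ ∑ i ∈ Finset.range p, n ^ i ∧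
          (padicValNat p m = padicValNat p d + 1 →
            padicValNat p (n - 1) = padicValNat p d))) :=
  stmt_2_general m p hp d hdm hdne hval
end

section
/- Let p be an odd prime and let q be a power of an odd prime. There exist χ ∈ {−1, 1} and a positive integer n such that (q − χ) divides n^p − 1 and (q − χ) does not divide n − 1, if and only if at least one of the following holds: some prime ℓ with ℓ ≡ 1 (mod p) divides q − 1 or q + 1; p² divides q − 1; or p² divides q + 1. -/
/-!
The condition says that some `n` has multiplicative order exactly `p` modulo `q - χ`. By Lagrange
and Cauchy this happens iff `p` divides `φ (q - χ) = #(ZMod (q - χ))ˣ`, and since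
`φ m = ∏ ℓ ^ (k - 1) * (ℓ - 1)` over the prime powers `ℓ ^ k ∥ m`, the prime `p` divides it iff
`p ∣ ℓ - 1` for some prime `ℓ ∣ m` or `p ^ 2 ∣ m`.
-/

open Nat

theorem exists_orderOf_eq_prime_iff_dvd_card_units {M : Type*} [Monoid M] [Finite Mˣ]
    {p : ℕ} [hp : Fact p.Prime] : (∃ x : M, orderOf x = p) ↔ p ∣ Nat.card Mˣ := by
  constructor
  · rintro ⟨x, hx⟩
    have hxu : IsUnit x := .of_pow_eq_one (hx ▸ pow_orderOf_eq_one x) hp.out.ne_zero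
    rw [← hx, ← hxu.unit_spec, orderOf_units]
    exact orderOf_dvd_natCard _
  · intro h
    obtain ⟨u, hu⟩ := exists_prime_orderOf_dvd_card' p h
    exact ⟨u, orderOf_units.trans hu⟩

theorem orderOf_natCast_eq_prime_iff (m : ℕ) {p : ℕ} [Fact p.Prime] (n : ℕ) :
    orderOf (n : ZMod m) = p ↔ (m : ℤ) ∣ (n : ℤ) ^ p - 1 ∧ ¬ (m : ℤ) ∣ (n : ℤ) - 1 := by
  rw [orderOf_eq_prime_iff, ← ZMod.intCast_eq_intCast_iff_dvd_sub,
    ← ZMod.intCast_eq_intCast_iff_dvd_sub]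
  push_cast
  simp only [eq_comm]

theorem exists_pos_orderOf_natCast_eq_prime_iff (m : ℕ) [NeZero m] {p : ℕ} [Fact p.Prime] :
    (∃ n : ℕ, 0 < n ∧ orderOf (n : ZMod m) = p) ↔ p ∣ φ m := by
  rw [← ZMod.card_units_eq_totient, ← Nat.card_eq_fintype_card,
    ← exists_orderOf_eq_prime_iff_dvd_card_units]
  constructor
  · rintro ⟨n, -, hn⟩
    exact ⟨n, hn⟩
  · rintro ⟨x, hx⟩
    -- adding `m` makes the representative positive without changing its residue
    refine ⟨x.val + m, by have := NeZero.pos m; omega, ?_⟩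
    simpa using hx

theorem mod_eq_one_iff_dvd_sub_one {ℓ p : ℕ} (hp : 1 < p) (hℓ : 1 ≤ ℓ) :
    ℓ % p = 1 ↔ p ∣ ℓ - 1 := by
  rw [← Nat.modEq_iff_dvd' hℓ, Nat.ModEq, Nat.mod_eq_of_lt hp, eq_comm]

theorem prime_dvd_totient_iff {m p : ℕ} (hm : m ≠ 0) (hp : p.Prime) :
    p ∣ φ m ↔ (∃ ℓ : ℕ, ℓ.Prime ∧ ℓ % p = 1 ∧ ℓ ∣ m) ∨ p ^ 2 ∣ m := by
  constructor
  · rw [totient_eq_prod_factorization hm, Finsupp.prod, Nat.support_factorization,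
      hp.prime.dvd_finsetProd_iff]
    rintro ⟨ℓ, hℓm, hdvd⟩
    have hℓ := Nat.prime_of_mem_primeFactors hℓm
    rcases (Nat.Prime.dvd_mul hp).mp hdvd with hpow | hsub
    · have hpℓ : p = ℓ := (Nat.prime_dvd_prime_iff_eq hp hℓ).mp (hp.dvd_of_dvd_pow hpow)
      have hk : 2 ≤ m.factorization ℓ := by
        have : m.factorization ℓ - 1 ≠ 0 := by
          rintro h
          rw [h, pow_zero, Nat.dvd_one] at hpow
          exact hp.ne_one hpow
        omega
      right
      subst hpℓ
      exact (pow_dvd_pow p hk).trans (Nat.ordProj_dvd m p)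
    · exact Or.inl ⟨ℓ, hℓ, (mod_eq_one_iff_dvd_sub_one hp.one_lt hℓ.one_le).mpr hsub,
        Nat.dvd_of_mem_primeFactors hℓm⟩
  · rintro (⟨ℓ, hℓ, hmod, hℓm⟩ | hpm)
    · refine Dvd.dvd.trans ?_ (totient_dvd_of_dvd hℓm)
      rw [totient_prime hℓ]
      exact (mod_eq_one_iff_dvd_sub_one hp.one_lt hℓ.one_le).mp hmod
    · refine Dvd.dvd.trans ?_ (totient_dvd_of_dvd hpm)
      rw [totient_prime_pow hp two_pos]
      exact dvd_mul_of_dvd_left (dvd_pow_self p (by norm_num)) _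

theorem stmt_4_general (q : ℕ) (hq : ∃ p' k : ℕ, p'.Prime ∧ Odd p' ∧ 0 < k ∧ q = p' ^ k)
    (p : ℕ) (hp : p.Prime) :
    (∃ χ : ℤ, (χ = 1 ∨ χ = -1) ∧ ∃ n : ℕ, 0 < n ∧
        ((q : ℤ) - χ) ∣ (n : ℤ) ^ p - 1 ∧ ¬ ((q : ℤ) - χ) ∣ (n : ℤ) - 1) ↔
      ((∃ ℓ : ℕ, ℓ.Prime ∧ ℓ % p = 1 ∧ (ℓ ∣ q - 1 ∨ ℓ ∣ q + 1)) ∨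
        p ^ 2 ∣ q - 1 ∨ p ^ 2 ∣ q + 1) := by
  have hq2 : 2 ≤ q := by
    obtain ⟨p', k, hp', -, hk, rfl⟩ := hq
    exact hp'.two_le.trans (Nat.le_self_pow hk.ne' p')
  have : NeZero (q - 1) := ⟨by omega⟩
  have := Fact.mk hp
  have hsub : (q : ℤ) - 1 = ((q - 1 : ℕ) : ℤ) := by push_cast [hq2.trans' one_le_two]; ring
  have hadd : (q : ℤ) - -1 = ((q + 1 : ℕ) : ℤ) := by push_cast; ring
  simp only [or_and_right, exists_or, exists_eq_left, hsub, hadd,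
    ← orderOf_natCast_eq_prime_iff, exists_pos_orderOf_natCast_eq_prime_iff,
    prime_dvd_totient_iff (by omega : q - 1 ≠ 0) hp, prime_dvd_totient_iff (by omega : q + 1 ≠ 0) hp, and_or_left, exists_or]
  exact or_or_or_comm

/-- Theorem 2.7: existence of a Rédei permutation over P¹(F_q) with 1- and
p-cycles, for an odd prime p. -/
theorem stmt_4 (q : ℕ) (hq : ∃ p' k : ℕ, p'.Prime ∧ Odd p' ∧ 0 < k ∧ q = p' ^ k)
    (p : ℕ) (hp : p.Prime) (hpodd : Odd p) :
    (∃ χ : ℤ, (χ = 1 ∨ χ = -1) ∧ ∃ n : ℕ, 0 < n ∧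
        ((q : ℤ) - χ) ∣ (n : ℤ) ^ p - 1 ∧ ¬ ((q : ℤ) - χ) ∣ (n : ℤ) - 1) ↔
      ((∃ ℓ : ℕ, ℓ.Prime ∧ ℓ % p = 1 ∧ (ℓ ∣ q - 1 ∨ ℓ ∣ q + 1)) ∨
        p ^ 2 ∣ q - 1 ∨ p ^ 2 ∣ q + 1) :=
  stmt_4_general q hq p hp
end

section
/- Let q be a power of an odd prime. The set of integers n with 1 ≤ n ≤ q + 1 such that (q + 1) divides n² − 1 and gcd(n − 1, q + 1) = 2 equals {q} if ν₂(q + 1) < 3, and equals {(q − 1)/2, q} if ν₂(q + 1) ≥ 3. -/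
/-!
Write `m = q + 1`, which is even. If `m ∣ (n - 1)(n + 1)` and `gcd (n - 1, m) = 2`, then
`m ∣ 2(n + 1)`, so for `1 ≤ n ≤ m` either `n = m - 1` or `2(n + 1) = m`. The first always works.
In the second, `gcd (n - 1, 2(n + 1)) = gcd (n - 1, 4)`, which is `2` exactly when `n ≡ 3 (mod 4)`,
i.e. when `8 ∣ m`, i.e. when `ν₂(q + 1) ≥ 3`; then `n = (q - 1)/2`.
-/

namespace Nat

theorem sq_sub_one_eq_mul (n : ℕ) : n ^ 2 - 1 = (n + 1) * (n - 1) := by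
  simpa using Nat.sq_sub_sq n 1

theorem dvd_two_mul_add_one_of_gcd_sub_one_eq_two {m n : ℕ} (hd : m ∣ n ^ 2 - 1)
    (hg : gcd (n - 1) m = 2) : m ∣ 2 * (n + 1) := by
  rw [sq_sub_one_eq_mul, mul_comm] at hd
  rw [← hg, gcd_comm]
  exact dvd_gcd_mul_iff_dvd_mul.mpr hd

theorem gcd_sub_one_two_mul_add_one {n : ℕ} (hn : 1 ≤ n) :
    gcd (n - 1) (2 * (n + 1)) = gcd (n - 1) 4 := by
  rw [show 2 * (n + 1) = 4 + 2 * (n - 1) by omega, gcd_add_mul_right_right]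

theorem gcd_four_eq_two_iff (a : ℕ) : gcd a 4 = 2 ↔ a % 4 = 2 := by
  rw [gcd_comm, gcd_rec]
  have : a % 4 < 4 := mod_lt a (by norm_num)
  interval_cases a % 4 <;> decide

theorem gcd_sub_one_two_mul_add_one_eq_two_iff {n : ℕ} (hn : 1 ≤ n) :
    gcd (n - 1) (2 * (n + 1)) = 2 ↔ 8 ∣ 2 * (n + 1) := by
  rw [gcd_sub_one_two_mul_add_one hn, gcd_four_eq_two_iff]
  omega

theorem gcd_sub_two_self_of_even {m : ℕ} (hm : Even m) (h2 : 2 ≤ m) : gcd (m - 2) m = 2 := by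
  rw [gcd_self_sub_left h2]
  exact gcd_eq_left (even_iff_two_dvd.mp hm)

theorem dvd_sq_sub_one_and_gcd_sub_one_eq_two_iff {m n : ℕ} (hm : Even m) (hn : 1 ≤ n)
    (hnm : n ≤ m) :
    (m ∣ n ^ 2 - 1 ∧ gcd (n - 1) m = 2) ↔ n = m - 1 ∨ (8 ∣ m ∧ 2 * (n + 1) = m) := by
  constructor
  · rintro ⟨hd, hg⟩
    have hn_ne : n ≠ m := by
      rintro rfl
      rw [gcd_self_sub_left hn, gcd_one_left] at hg
      exact absurd hg (by norm_num)
    obtain ⟨c, hc⟩ := dvd_two_mul_add_one_of_gcd_sub_one_eq_two hd hg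
    have hc3 : c < 3 := by
      by_contra! h3
      have := Nat.mul_le_mul_left m h3
      omega
    interval_cases c
    · omega
    · rw [mul_one] at hc
      subst hc
      exact Or.inr ⟨(gcd_sub_one_two_mul_add_one_eq_two_iff hn).mp hg, rfl⟩
    · omega
  · rintro (rfl | ⟨h8, rfl⟩)
    · refine ⟨?_, ?_⟩
      · rw [sq_sub_one_eq_mul, Nat.sub_add_cancel (by omega)]
        exact dvd_mul_right _ _
      · rw [Nat.sub_sub]
        exact gcd_sub_two_self_of_even hm (by omega)
    · have hg := (gcd_sub_one_two_mul_add_one_eq_two_iff hn).mpr h8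
      refine ⟨?_, hg⟩
      rw [sq_sub_one_eq_mul, mul_comm 2]
      exact Nat.mul_dvd_mul_left _ (hg ▸ gcd_dvd_left _ _)

theorem filter_dvd_sq_sub_one_and_gcd_sub_one_eq_two {m : ℕ} (hm : Even m) (hm0 : 0 < m) :
    (Finset.Icc 1 m).filter (fun n => m ∣ n ^ 2 - 1 ∧ gcd (n - 1) m = 2) =
      if 8 ∣ m then {m / 2 - 1, m - 1} else {m - 1} := by
  have h2 : 2 ∣ m := even_iff_two_dvd.mp hm
  ext n
  simp only [Finset.mem_filter, Finset.mem_Icc]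
  constructor
  · rintro ⟨hn, h⟩
    have := (dvd_sq_sub_one_and_gcd_sub_one_eq_two_iff hm hn.1 hn.2).mp h
    split_ifs <;> simp <;> omega
  · intro h
    have hn : 1 ≤ n ∧ n ≤ m := by split_ifs at h <;> simp at h <;> omega
    refine ⟨hn, (dvd_sq_sub_one_and_gcd_sub_one_eq_two_iff hm hn.1 hn.2).mpr ?_⟩
    split_ifs at h <;> simp at h <;> omega

end Nat

/-- Proposition 3.9: the Rédei involutions with two fixed points. -/
theorem stmt_11 (q : ℕ) (hq : ∃ p' j : ℕ, p'.Prime ∧ Odd p' ∧ 0 < j ∧ q = p' ^ j) :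
    (padicValNat 2 (q + 1) < 3 →
      (Finset.Icc 1 (q + 1)).filter
        (fun n => (q + 1) ∣ n ^ 2 - 1 ∧ Nat.gcd (n - 1) (q + 1) = 2) = {q}) ∧
    (3 ≤ padicValNat 2 (q + 1) →
      (Finset.Icc 1 (q + 1)).filter
        (fun n => (q + 1) ∣ n ^ 2 - 1 ∧ Nat.gcd (n - 1) (q + 1) = 2) =
        {(q - 1) / 2, q}) := by
  have hq_odd : Odd q := by
    obtain ⟨p, j, -, hp, -, rfl⟩ := hq
    exact hp.pow
  have h8 : 8 ∣ q + 1 ↔ 3 ≤ padicValNat 2 (q + 1) :=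
    padicValNat_dvd_iff_le (p := 2) (n := 3) q.succ_ne_zero
  have hhalf : (q + 1) / 2 - 1 = (q - 1) / 2 := by omega
  rw [Nat.filter_dvd_sq_sub_one_and_gcd_sub_one_eq_two hq_odd.add_one q.succ_pos, ← h8,
    hhalf, Nat.add_sub_cancel]
  exact ⟨fun h => if_neg (by omega), fun h => if_pos h⟩
end
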